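/- arXiv:2503.24207 — 2 statements merged into one kernel-verified Lean document; each statement's English description precedes it below -/
import Mathlib

section
/- Let 𝒜 ⊆ E^[∞] be an infinite almost disjoint family and let Y ⊆ E. The following are equivalent: (1) span(Y) ∈ I^+(𝒜); (2) span(Y) ∈ I^{++}(𝒜), or there exists B ∈ E^[∞] with ⟨B⟩ ⊆ span(Y) such that B is almost disjoint from every element of 𝒜. Consequently, if 𝒜 is mad, then H^-(𝒜) = H(𝒜). -/
noncomputable section

variable {𝔽 : Type} [Field 𝔽]

/-- The `ℵ₀`-dimensional vector space `E` over `𝔽`, realised as finitely supported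
functions `ℕ →₀ 𝔽`; the fixed basis is `eVec 𝔽 n = Finsupp.single n 1`. -/
abbrev EVec (𝔽 : Type) [Field 𝔽] : Type := ℕ →₀ 𝔽

/-- The basis vector `e n`. -/
def eVec (𝔽 : Type) [Field 𝔽] (n : ℕ) : EVec 𝔽 := Finsupp.single n 1

/-- `x < y` iff `max (supp x) < min (supp y)`, i.e. every element of the support of `x`
is below every element of the support of `y`. -/
def BlockLt (x y : EVec 𝔽) : Prop := ∀ i ∈ x.support, ∀ j ∈ y.support, i < j

/-- An infinite block sequence: a `<`-increasing sequence of nonzero vectors. -/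
def IsBlockSeq (A : ℕ → EVec 𝔽) : Prop :=
  (∀ n, A n ≠ 0) ∧ ∀ m n : ℕ, m < n → BlockLt (A m) (A n)

/-- A finite block sequence (as a list). -/
def IsBlockList (a : List (EVec 𝔽)) : Prop :=
  (∀ x ∈ a, x ≠ 0) ∧ a.Pairwise BlockLt

/-- `⟨A⟩`, the span of (the range of) a block sequence. -/
def spanSeq (A : ℕ → EVec 𝔽) : Submodule 𝔽 (EVec 𝔽) := Submodule.span 𝔽 (Set.range A)

/-- `⟨a⟩`, the span of a finite block sequence. -/
def spanList (a : List (EVec 𝔽)) : Submodule 𝔽 (EVec 𝔽) := Submodule.span 𝔽 {x | x ∈ a}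

/-- `A/N = (x_n)_{n ≥ N}`. -/
def tailSeq (A : ℕ → EVec 𝔽) (N : ℕ) : ℕ → EVec 𝔽 := fun n => A (n + N)

/-- `r_n(A) = (x_0, …, x_{n-1})`. -/
def rApprox (A : ℕ → EVec 𝔽) (n : ℕ) : List (EVec 𝔽) := (List.range n).map A

/-- `A ≤ B` iff `⟨A⟩ ⊆ ⟨B⟩`. -/
def SeqLe (A B : ℕ → EVec 𝔽) : Prop := spanSeq A ≤ spanSeq B

/-- `A ≤* B` iff `A/N ≤ B` for some `N`. -/
def SeqLeStar (A B : ℕ → EVec 𝔽) : Prop := ∃ N, SeqLe (tailSeq A N) B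

/-- `d_A(a)`: the least `N` such that `max (supp a)` lies below (the support of) every
vector of `A/N` (this is `0` when `a` is empty). -/
def depthIn (A : ℕ → EVec 𝔽) (a : List (EVec 𝔽)) : ℕ :=
  sInf {N | ∀ x ∈ a, ∀ k, N ≤ k → BlockLt x (A k)}

/-- `⟨C⟩ ⊆ Y`, understood modulo zero. -/
def SpanSub (C : ℕ → EVec 𝔽) (Y : Set (EVec 𝔽)) : Prop :=
  ∀ x ∈ spanSeq C, x ≠ 0 → x ∈ Y

/-- `Y` is big if `⟨C⟩ ⊆ Y` (mod zero) for some infinite block sequence `C`. -/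
def BigSet (Y : Set (EVec 𝔽)) : Prop := ∃ C, IsBlockSeq C ∧ SpanSub C Y

/-- `Y` is small if it is not big. -/
def SmallSet (Y : Set (EVec 𝔽)) : Prop := ¬ BigSet Y

/-- `Y` is very small if `Y ∪ Z` is small for every small `Z`. -/
def VerySmallSet (Y : Set (EVec 𝔽)) : Prop :=
  ∀ Z : Set (EVec 𝔽), SmallSet Z → SmallSet (Y ∪ Z)

/-- A semicoideal: a `≤*`-upward closed set of infinite block sequences. -/
def Semicoideal (H : Set (ℕ → EVec 𝔽)) : Prop :=
  (∀ A ∈ H, IsBlockSeq A) ∧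
    ∀ A ∈ H, ∀ B : ℕ → EVec 𝔽, IsBlockSeq B → SeqLeStar A B → B ∈ H

/-- `H ↾ A = {B ∈ H : B ≤ A}`. -/
def restrictBelow (H : Set (ℕ → EVec 𝔽)) (A : ℕ → EVec 𝔽) : Set (ℕ → EVec 𝔽) :=
  {B ∈ H | SeqLe B A}

/-- `Y ⊆ E` is `H`-dense below `A`. -/
def HDense (H : Set (ℕ → EVec 𝔽)) (Y : Set (EVec 𝔽)) (A : ℕ → EVec 𝔽) : Prop :=
  ∀ B ∈ restrictBelow H A, ∃ C, IsBlockSeq C ∧ SeqLe C B ∧ SpanSub C Y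

/-- `H` is full. -/
def FullFam (H : Set (ℕ → EVec 𝔽)) : Prop :=
  ∀ Y : Set (EVec 𝔽), ∀ A ∈ H, HDense H Y A → ∃ B ∈ restrictBelow H A, SpanSub B Y

/-- `H` is a coideal. -/
def CoidealFam (H : Set (ℕ → EVec 𝔽)) : Prop :=
  ∀ Y : Set (EVec 𝔽), ∀ A ∈ H, ∃ B ∈ restrictBelow H A, SpanSub B Y ∨ SpanSub B Yᶜ

/-- `B` weakly diagonalises the `≤`-decreasing sequence `As`. -/
def WeakDiag (As : ℕ → ℕ → EVec 𝔽) (B : ℕ → EVec 𝔽) : Prop :=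
  SeqLe B (As 0) ∧ ∀ n, SeqLeStar B (As n)

/-- The (p)-property. -/
def PProp (H : Set (ℕ → EVec 𝔽)) : Prop :=
  ∀ As : ℕ → ℕ → EVec 𝔽, (∀ n, As n ∈ H) → (∀ n, SeqLe (As (n + 1)) (As n)) →
    ∃ B ∈ H, WeakDiag As B

/-- The (q)-property: `lo m`, `hi m` are the endpoints of the finite intervals `I m`. -/
def QProp (H : Set (ℕ → EVec 𝔽)) : Prop :=
  ∀ A ∈ H, ∀ lo hi : ℕ → ℕ, (∀ m, lo m ≤ hi m) → (∀ m, hi m < lo (m + 1)) →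
    ∃ B ∈ restrictBelow H A, ∀ n : ℕ, ∃ m : ℕ,
      spanList (rApprox B n) ≤ spanList (rApprox A (lo m - 1)) ∧
      SeqLe (tailSeq B n) (tailSeq A (hi m))

/-- `B` diagonalises the `≤`-decreasing sequence `As` within `A`. -/
def DiagWithin (A : ℕ → EVec 𝔽) (As : ℕ → ℕ → EVec 𝔽) (B : ℕ → EVec 𝔽) : Prop :=
  SeqLe B A ∧ ∀ n, SeqLe (tailSeq B n) (As (depthIn A (rApprox B n)))

/-- `H` is selective. -/
def SelectiveFam (H : Set (ℕ → EVec 𝔽)) : Prop :=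
  ∀ A ∈ H, ∀ As : ℕ → ℕ → EVec 𝔽, (∀ n, As n ∈ H) →
    (∀ n, SeqLe (As (n + 1)) (As n)) → SeqLe (As 0) A →
    ∃ B ∈ H, DiagWithin A As B

/-- Two subspaces are almost disjoint if their intersection is finite dimensional. -/
def AlmostDisjoint (V W : Submodule 𝔽 (EVec 𝔽)) : Prop :=
  FiniteDimensional 𝔽 ↥(V ⊓ W)

/-- An almost disjoint family of block sequences. -/
def ADFamily (𝒜 : Set (ℕ → EVec 𝔽)) : Prop :=
  (∀ A ∈ 𝒜, IsBlockSeq A) ∧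
    ∀ A ∈ 𝒜, ∀ B ∈ 𝒜, A ≠ B → AlmostDisjoint (spanSeq A) (spanSeq B)

/-- A maximal almost disjoint (mad) family of block sequences. -/
def MadFamily (𝒜 : Set (ℕ → EVec 𝔽)) : Prop :=
  ADFamily 𝒜 ∧
    ∀ C : ℕ → EVec 𝔽, IsBlockSeq C →
      ∃ A ∈ 𝒜, ¬ AlmostDisjoint (spanSeq C) (spanSeq A)

/-- `Y ∈ I(𝒜)`: some finite union of spans of members of `𝒜` almost covers `Y`. -/
def MemI (𝒜 : Set (ℕ → EVec 𝔽)) (Y : Set (EVec 𝔽)) : Prop :=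
  ∃ F : Finset (ℕ → EVec 𝔽), ↑F ⊆ 𝒜 ∧
    SmallSet (Y \ ⋃ A ∈ F, (spanSeq A : Set (EVec 𝔽)))

/-- `Y ∈ I⁺(𝒜)`. -/
def MemIplus (𝒜 : Set (ℕ → EVec 𝔽)) (Y : Set (EVec 𝔽)) : Prop := ¬ MemI 𝒜 Y

/-- `Y ∈ I⁺⁺(𝒜)`: infinitely many `A ∈ 𝒜` with `Y ∩ ⟨A⟩` big. -/
def MemIpp (𝒜 : Set (ℕ → EVec 𝔽)) (Y : Set (EVec 𝔽)) : Prop :=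
  {A ∈ 𝒜 | BigSet (Y ∩ (spanSeq A : Set (EVec 𝔽)))}.Infinite

/-- `H⁻(𝒜)`. -/
def HMinus (𝒜 : Set (ℕ → EVec 𝔽)) : Set (ℕ → EVec 𝔽) :=
  {B | IsBlockSeq B ∧ MemIplus 𝒜 (spanSeq B : Set (EVec 𝔽))}

/-- `H(𝒜)`. -/
def HFam (𝒜 : Set (ℕ → EVec 𝔽)) : Set (ℕ → EVec 𝔽) :=
  {B | IsBlockSeq B ∧ MemIpp 𝒜 (spanSeq B : Set (EVec 𝔽))}

/-- `S` splits the interval partition whose intervals are `[b n, b (n+1))`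
(where `b 0 = 0` and `b` is strictly monotone). -/
def SplitsPartition (S : Set ℕ) (b : ℕ → ℕ) : Prop :=
  {n | ∀ k, b n ≤ k → k < b (n + 1) → k ∈ S}.Infinite ∧
  {n | ∀ k, b n ≤ k → k < b (n + 1) → k ∉ S}.Infinite

/-- `Z_S = span{e_n : n ∈ S}`. -/
def ZSub (𝔽 : Type) [Field 𝔽] (S : Set ℕ) : Submodule 𝔽 (EVec 𝔽) :=
  Submodule.span 𝔽 ((fun n => eVec 𝔽 n) '' S)

/-- The Ellentuck set `[a, A]`. -/
def EllSet (a : List (EVec 𝔽)) (A : ℕ → EVec 𝔽) : Set (ℕ → EVec 𝔽) :=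
  {B | IsBlockSeq B ∧ SeqLe B A ∧ rApprox B a.length = a}

/-- `𝒜ℛ ↾ A`: finite block sequences whose span lies in `⟨A⟩`. -/
def ARbelow (A : ℕ → EVec 𝔽) : Set (List (EVec 𝔽)) :=
  {a | IsBlockList a ∧ spanList a ≤ spanSeq A}

/-- `𝒜ℛ ↾ [a, A]`: members of `𝒜ℛ ↾ A` extending `a`. -/
def ARbelowIn (a : List (EVec 𝔽)) (A : ℕ → EVec 𝔽) : Set (List (EVec 𝔽)) :=
  {b ∈ ARbelow A | a <+: b}

/-- `{D b}` is a dense open family below `[a, A]` in `H`. -/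
def DenseOpenBelow (H : Set (ℕ → EVec 𝔽)) (a : List (EVec 𝔽)) (A : ℕ → EVec 𝔽)
    (D : List (EVec 𝔽) → Set (ℕ → EVec 𝔽)) : Prop :=
  ∀ b ∈ ARbelowIn a A,
    D b ⊆ H ∩ EllSet b A ∧
    (∀ B ∈ D b, ∀ C ∈ H ∩ EllSet b B, C ∈ D b) ∧
    (∀ B ∈ H ∩ EllSet b A, ∃ C ∈ H ∩ EllSet b B, C ∈ D b)

/-- `B` diagonalises the dense open family `{D b}` below `[a, A]` in `H`. -/
def DiagFamily (H : Set (ℕ → EVec 𝔽)) (a : List (EVec 𝔽)) (A : ℕ → EVec 𝔽)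
    (D : List (EVec 𝔽) → Set (ℕ → EVec 𝔽)) (B : ℕ → EVec 𝔽) : Prop :=
  B ∈ H ∩ EllSet a A ∧
    ∀ b ∈ ARbelowIn a A, ∃ Ab ∈ D b, EllSet b B ⊆ EllSet b Ab

/-- `H` is semiselective. -/
def Semiselective (H : Set (ℕ → EVec 𝔽)) : Prop :=
  ∀ A ∈ H, ∀ a ∈ ARbelow A, ∀ D : List (EVec 𝔽) → Set (ℕ → EVec 𝔽),
    DenseOpenBelow H a A D → ∃ B, DiagFamily H a A D B

/-- `D` is a dense open subset of `(H, ≤)`. -/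
def DenseOpenIn (H D : Set (ℕ → EVec 𝔽)) : Prop :=
  D ⊆ H ∧ (∀ A ∈ D, ∀ B ∈ H, SeqLe B A → B ∈ D) ∧ ∀ A ∈ H, ∃ B ∈ D, SeqLe B A
section Helpers

variable {𝔽 : Type} [Field 𝔽]

lemma mem_spanSeq (A : ℕ → EVec 𝔽) (n : ℕ) : A n ∈ spanSeq A :=
  Submodule.subset_span ⟨n, rfl⟩

lemma spanSeq_tail_le (A : ℕ → EVec 𝔽) (k : ℕ) : spanSeq (tailSeq A k) ≤ spanSeq A := by
  apply Submodule.span_le.2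
  rintro x ⟨n, rfl⟩
  exact mem_spanSeq A (n + k)

lemma isBlockSeq_tail {A : ℕ → EVec 𝔽} (h : IsBlockSeq A) (k : ℕ) : IsBlockSeq (tailSeq A k) :=
  ⟨fun _ => h.1 _, fun m n hmn => h.2 _ _ (by omega)⟩

lemma le_of_mem_support {A : ℕ → EVec 𝔽} (h : IsBlockSeq A) :
    ∀ n, ∀ i ∈ (A n).support, n ≤ i := by
  intro n
  induction n with
  | zero => intro i _; exact Nat.zero_le i
  | succ n ih =>
    intro i hi
    obtain ⟨j, hj⟩ := Finsupp.support_nonempty_iff.2 (h.1 n)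
    exact Nat.succ_le_of_lt (lt_of_le_of_lt (ih j hj)
      (h.2 n (n + 1) (Nat.lt_succ_self n) j hj i hi))

lemma spanSeq_le_supported {C : ℕ → EVec 𝔽} {S : Set ℕ}
    (h : ∀ n, ↑(C n).support ⊆ S) : spanSeq C ≤ Finsupp.supported 𝔽 𝔽 S := by
  apply Submodule.span_le.2
  rintro x ⟨n, rfl⟩
  exact (Finsupp.mem_supported 𝔽 _).2 (h n)

lemma exists_support_bound (U : Submodule 𝔽 (EVec 𝔽)) (hU : FiniteDimensional 𝔽 U) :
    ∃ N : ℕ, ∀ u ∈ U, ∀ i ∈ u.support, i ≤ N := by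
  obtain ⟨s, hs⟩ := (Submodule.fg_iff_finiteDimensional U).2 hU
  refine ⟨s.sup (fun v => v.support.sup id), ?_⟩
  have hle : U ≤ Finsupp.supported 𝔽 𝔽 (Set.Iic (s.sup fun v => v.support.sup id)) := by
    rw [← hs]
    apply Submodule.span_le.2
    intro x hx
    refine (Finsupp.mem_supported 𝔽 _).2 ?_
    intro i hi
    exact le_trans (Finset.le_sup (f := id) hi) (Finset.le_sup (f := fun v => v.support.sup id) (Finset.mem_coe.1 hx))
  intro u hu i hi
  exact (Finsupp.mem_supported 𝔽 _).1 (hle hu) hi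

lemma exists_beyond (V : Submodule 𝔽 (EVec 𝔽)) (hV : ¬ FiniteDimensional 𝔽 V) (N : ℕ) :
    ∃ v, v ∈ V ∧ v ≠ 0 ∧ ∀ i ∈ v.support, N < i := by
  by_contra hc
  push_neg at hc
  apply hV
  let f : V →ₗ[𝔽] (Fin (N + 1) → 𝔽) :=
    { toFun := fun v i => (v : EVec 𝔽) i
      map_add' := by intro a b; funext i; simp
      map_smul' := by intro c a; funext i; simp }
  have hker : ∀ v : V, f v = 0 → v = 0 := by
    intro v hv
    by_contra h0
    have hv0 : (v : EVec 𝔽) ≠ 0 := by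
      intro h; exact h0 (Subtype.ext h)
    obtain ⟨i, hi, hile⟩ := hc (v : EVec 𝔽) v.2 hv0
    have : (v : EVec 𝔽) i = 0 := congrFun hv ⟨i, by omega⟩
    exact (Finsupp.mem_support_iff.1 hi) this
  exact FiniteDimensional.of_injective f (fun a b hab => sub_eq_zero.1 (hker (a - b) (by funext i; have h := congrFun hab i; change ((a - b : V) : EVec 𝔽) i = 0; change (a : EVec 𝔽) i = (b : EVec 𝔽) i at h; simp [h])))

lemma exists_blockSeq_of_not_fd (V : Submodule 𝔽 (EVec 𝔽)) (hV : ¬ FiniteDimensional 𝔽 V) :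
    ∃ C : ℕ → EVec 𝔽, IsBlockSeq C ∧ ∀ n, C n ∈ V := by
  choose g hgV hg0 hgsupp using exists_beyond V hV
  let b : ℕ → ℕ := fun n => Nat.rec 0 (fun _ p => max p ((g p).support.sup id)) n
  have hb : ∀ n, b (n + 1) = max (b n) ((g (b n)).support.sup id) := fun n => rfl
  have hbmono : Monotone b := monotone_nat_of_le_succ (fun n => by rw [hb]; exact le_max_left _ _)
  refine ⟨fun n => g (b n), ⟨fun n => hg0 _, ?_⟩, fun n => hgV _⟩
  intro m n hmn i hi j hj
  have h1 : i ≤ b (m + 1) := by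
    rw [hb]; exact le_trans (Finset.le_sup (f := id) hi) (le_max_right _ _)
  have h2 : b (m + 1) ≤ b n := hbmono hmn
  have h3 : b n < j := hgsupp (b n) j hj
  omega

lemma big_diff (W : Set (EVec 𝔽)) (F : Finset (ℕ → EVec 𝔽)) (C : ℕ → EVec 𝔽)
    (hC : IsBlockSeq C) (hW : SpanSub C W)
    (hfd : ∀ A ∈ F, FiniteDimensional 𝔽 ↥(spanSeq C ⊓ spanSeq A)) :
    BigSet (W \ ⋃ A ∈ F, (spanSeq A : Set (EVec 𝔽))) := by
  classical
  have key : ∀ A ∈ F, ∃ N : ℕ, ∀ u ∈ spanSeq C ⊓ spanSeq A, ∀ i ∈ u.support, i ≤ N :=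
    fun A hA => exists_support_bound _ (hfd A hA)
  choose! N hN using key
  set M := F.sup N with hM
  refine ⟨tailSeq C (M + 1), isBlockSeq_tail hC _, ?_⟩
  have htail : spanSeq (tailSeq C (M + 1)) ≤ Finsupp.supported 𝔽 𝔽 (Set.Ioi M) := by
    apply spanSeq_le_supported
    intro n i hi
    have := le_of_mem_support hC (n + (M + 1)) i hi
    exact Set.mem_Ioi.2 (by omega)
  intro x hx hx0
  have hxC : x ∈ spanSeq C := spanSeq_tail_le C (M + 1) hx
  refine ⟨hW x hxC hx0, ?_⟩
  intro hmem
  simp only [Set.mem_iUnion] at hmem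
  obtain ⟨A, hA, hxA⟩ := hmem
  obtain ⟨i, hi⟩ := Finsupp.support_nonempty_iff.2 hx0
  have h1 : i ≤ N A := hN A hA x ⟨hxC, hxA⟩ i hi
  have h2 : N A ≤ M := Finset.le_sup hA
  have h3 : M < i := Set.mem_Ioi.1 ((Finsupp.mem_supported 𝔽 _).1 (htail hx) hi)
  omega

end Helpers

/-- for an infinite almost disjoint family `𝒜`, `span Y ∈ I⁺(𝒜)` iff
`span Y ∈ I⁺⁺(𝒜)` or some block sequence inside `span Y` is almost disjoint from every
member of `𝒜`; consequently, if `𝒜` is mad then `H⁻(𝒜) = H(𝒜)`. -/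
theorem statement8 [Countable 𝔽] (𝒜 : Set (ℕ → EVec 𝔽))
    (hAD : ADFamily 𝒜) (hinf : 𝒜.Infinite) :
    (∀ Y : Set (EVec 𝔽),
      MemIplus 𝒜 (Submodule.span 𝔽 Y : Set (EVec 𝔽)) ↔
        (MemIpp 𝒜 (Submodule.span 𝔽 Y : Set (EVec 𝔽)) ∨
          ∃ B : ℕ → EVec 𝔽, IsBlockSeq B ∧ spanSeq B ≤ Submodule.span 𝔽 Y ∧
            ∀ A ∈ 𝒜, AlmostDisjoint (spanSeq B) (spanSeq A))) ∧
    (MadFamily 𝒜 → HMinus 𝒜 = HFam 𝒜) := by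
  classical
  have main : ∀ W : Submodule 𝔽 (EVec 𝔽),
      MemIplus 𝒜 (W : Set (EVec 𝔽)) ↔
        (MemIpp 𝒜 (W : Set (EVec 𝔽)) ∨
          ∃ B : ℕ → EVec 𝔽, IsBlockSeq B ∧ spanSeq B ≤ W ∧
            ∀ A ∈ 𝒜, AlmostDisjoint (spanSeq B) (spanSeq A)) := by
    intro W
    constructor
    · intro hplus
      by_cases hpp : MemIpp 𝒜 (W : Set (EVec 𝔽))
      · exact Or.inl hpp
      · right
        have hfin : {A ∈ 𝒜 | BigSet ((W : Set (EVec 𝔽)) ∩ (spanSeq A : Set (EVec 𝔽)))}.Finite :=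
          Set.not_infinite.1 hpp
        have hF𝒜 : ↑hfin.toFinset ⊆ 𝒜 := by
          intro A hA
          exact (hfin.mem_toFinset.1 (Finset.mem_coe.1 hA)).1
        have hbig : BigSet ((W : Set (EVec 𝔽)) \
            ⋃ A ∈ hfin.toFinset, (spanSeq A : Set (EVec 𝔽))) := by
          by_contra hsmall
          exact hplus ⟨hfin.toFinset, hF𝒜, hsmall⟩
        obtain ⟨C, hC, hCsub⟩ := hbig
        refine ⟨C, hC, ?_, ?_⟩
        · apply Submodule.span_le.2
          rintro x ⟨n, rfl⟩
          exact (hCsub (C n) (mem_spanSeq C n) (hC.1 n)).1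
        · intro A hA
          by_cases hAF : A ∈ hfin.toFinset
          · have hbot : spanSeq C ⊓ spanSeq A = ⊥ := by
              rw [eq_bot_iff]
              intro x hx
              by_contra hx0
              have hx0' : x ≠ 0 := fun h => hx0 (h ▸ Submodule.zero_mem ⊥)
              have := (hCsub x hx.1 hx0').2
              apply this
              simp only [Set.mem_iUnion]
              exact ⟨A, hAF, hx.2⟩
            show FiniteDimensional 𝔽 ↥(spanSeq C ⊓ spanSeq A)
            rw [hbot]
            exact (Submodule.fg_iff_finiteDimensional _).1 ⟨∅, by simp⟩
          · by_contra hnfd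
            obtain ⟨D, hD, hDmem⟩ := exists_blockSeq_of_not_fd _ hnfd
            apply hAF
            rw [hfin.mem_toFinset]
            refine ⟨hA, D, hD, ?_⟩
            intro x hx hx0
            have hxCA : x ∈ spanSeq C ⊓ spanSeq A := by
              have : spanSeq D ≤ spanSeq C ⊓ spanSeq A := by
                apply Submodule.span_le.2
                rintro y ⟨n, rfl⟩
                exact hDmem n
              exact this hx
            exact ⟨(hCsub x hxCA.1 hx0).1, hxCA.2⟩
    · rintro h ⟨F, hF, hsmall⟩
      apply hsmall
      rcases h with hpp | ⟨B, hB, hBW, hBAD⟩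
      · obtain ⟨A, hAset, hAF⟩ := (hpp.diff (F : Set (ℕ → EVec 𝔽)).toFinite).nonempty
        obtain ⟨hA𝒜, hAbig⟩ := hAset
        obtain ⟨C, hC, hCsub⟩ := hAbig
        have hCA : spanSeq C ≤ spanSeq A := by
          apply Submodule.span_le.2
          rintro x ⟨n, rfl⟩
          exact (hCsub (C n) (mem_spanSeq C n) (hC.1 n)).2
        apply big_diff _ F C hC
        · intro x hx hx0
          exact (hCsub x hx hx0).1
        · intro A' hA'
          have hne : A ≠ A' := fun h => hAF (h ▸ Finset.mem_coe.2 hA')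
          have hfd : FiniteDimensional 𝔽 ↥(spanSeq A ⊓ spanSeq A') :=
            hAD.2 A hA𝒜 A' (hF (Finset.mem_coe.2 hA')) hne
          exact Submodule.finiteDimensional_of_le (inf_le_inf_right _ hCA)
      · apply big_diff _ F B hB
        · intro x hx _
          exact hBW hx
        · intro A' hA'
          exact hBAD A' (hF (Finset.mem_coe.2 hA'))
  constructor
  · intro Y
    exact main (Submodule.span 𝔽 Y)
  · intro hmad
    ext B
    simp only [HMinus, HFam, Set.mem_setOf_eq]
    constructor
    · rintro ⟨hB, hplus⟩
      refine ⟨hB, ?_⟩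
      rcases (main (spanSeq B)).1 hplus with h | ⟨C, hC, _, hCAD⟩
      · exact h
      · obtain ⟨A, hA, hnAD⟩ := hmad.2 C hC
        exact absurd (hCAD A hA) hnAD
    · rintro ⟨hB, hpp⟩
      exact ⟨hB, (main (spanSeq B)).2 (Or.inl hpp)⟩
end
end

section
/- Let A ∈ E^[∞] and let W ⊆ E be a subspace. Then ⟨A⟩ ∩ W is small if and only if ⟨A/N⟩ ∩ W = {0} for some N. Consequently: (1) A, B ∈ E^[∞] are almost disjoint if and only if ⟨A/N⟩ ∩ ⟨B⟩ = {0} for some N; (2) if A/N and B are almost disjoint for some N, then A and B are almost disjoint. -/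
noncomputable section

variable {𝔽 : Type} [Field 𝔽]

section Statement9Aux
set_option maxHeartbeats 1000000
set_option synthInstance.maxHeartbeats 400000

variable {𝔽 : Type} [Field 𝔽]

private lemma blockSeq_supp_ge {A : ℕ → EVec 𝔽} (hA : IsBlockSeq A) :
    ∀ n, ∀ j ∈ (A n).support, n ≤ j := by
  intro n
  induction n with
  | zero => intro j _; exact Nat.zero_le j
  | succ n ih =>
    intro j hj
    obtain ⟨i, hi⟩ := Finsupp.support_nonempty_iff.mpr (hA.1 n)
    exact Nat.succ_le_of_lt
      (lt_of_le_of_lt (ih i hi) (hA.2 n (n + 1) (Nat.lt_succ_self n) i hi j hj))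

private lemma tail_supp {A : ℕ → EVec 𝔽} (hA : IsBlockSeq A) (N : ℕ) {x : EVec 𝔽}
    (hx : x ∈ spanSeq (tailSeq A N)) : ∀ j ∈ x.support, N ≤ j := by
  have hle : spanSeq (tailSeq A N) ≤ Finsupp.supported 𝔽 𝔽 (Set.Ici N) := by
    apply Submodule.span_le.mpr
    rintro _ ⟨n, rfl⟩
    rw [SetLike.mem_coe, Finsupp.mem_supported]
    intro j hj
    exact le_trans (Nat.le_add_left N n) (blockSeq_supp_ge hA (n + N) j hj)
  have h := (Finsupp.mem_supported 𝔽 x).mp (hle hx)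
  intro j hj
  exact h hj

private lemma tail_le (A : ℕ → EVec 𝔽) (N : ℕ) : spanSeq (tailSeq A N) ≤ spanSeq A := by
  apply Submodule.span_mono
  rintro _ ⟨n, rfl⟩
  exact ⟨n + N, rfl⟩

private lemma blockSeq_li {A : ℕ → EVec 𝔽} (hA : IsBlockSeq A) : LinearIndependent 𝔽 A := by
  rw [linearIndependent_iff']
  intro s g hsum i hi
  by_contra hgi
  obtain ⟨k, hk⟩ := Finsupp.support_nonempty_iff.mpr (hA.1 i)
  have hzero : (∑ j ∈ s, g j • A j) k = 0 := by rw [hsum]; rfl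
  rw [Finsupp.finset_sum_apply] at hzero
  have hsing : ∀ j ∈ s, j ≠ i → (g j • A j) k = 0 := by
    intro j hj hne
    have hk' : k ∉ (A j).support := by
      intro hk'
      rcases lt_or_gt_of_ne hne with h | h
      · exact lt_irrefl k (hA.2 j i h k hk' k hk)
      · exact lt_irrefl k (hA.2 i j h k hk k hk')
    rw [Finsupp.smul_apply, Finsupp.notMem_support_iff.mp hk', smul_zero]
  rw [Finset.sum_eq_single i hsing (fun h => absurd hi h)] at hzero
  rw [Finsupp.smul_apply, smul_eq_mul] at hzero
  rcases mul_eq_zero.mp hzero with h | h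
  · exact hgi h
  · exact Finsupp.mem_support_iff.mp hk h

private lemma span_split (A : ℕ → EVec 𝔽) (N : ℕ) :
    spanSeq A ≤ Submodule.span 𝔽 (A '' Set.Iio N) ⊔ spanSeq (tailSeq A N) := by
  apply Submodule.span_le.mpr
  rintro _ ⟨n, rfl⟩
  by_cases h : n < N
  · exact Submodule.mem_sup_left (Submodule.subset_span ⟨n, h, rfl⟩)
  · refine Submodule.mem_sup_right (Submodule.subset_span ⟨n - N, ?_⟩)
    show A (n - N + N) = A n
    rw [Nat.sub_add_cancel (not_lt.mp h)]

private lemma findim_of_tail_bot {A : ℕ → EVec 𝔽} (N : ℕ) (W : Submodule 𝔽 (EVec 𝔽))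
    (hbot : spanSeq (tailSeq A N) ⊓ W = ⊥) :
    FiniteDimensional 𝔽 ↥(spanSeq A ⊓ W) := by
  set T := spanSeq (tailSeq A N) with hT
  set F := Submodule.span 𝔽 (A '' Set.Iio N) with hF
  have hFfin : FiniteDimensional 𝔽 F :=
    FiniteDimensional.span_of_finite _ ((Set.finite_Iio N).image A)
  have hmap : ∀ x ∈ spanSeq A ⊓ W, T.mkQ x ∈ F.map T.mkQ := by
    intro x hx
    obtain ⟨f, hf, t, ht, rfl⟩ :=
      Submodule.mem_sup.mp (span_split A N (Submodule.mem_inf.mp hx).1)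
    have heq : T.mkQ (f + t) = T.mkQ f := by
      rw [map_add]
      have : T.mkQ t = 0 := by
        rw [Submodule.mkQ_apply, Submodule.Quotient.mk_eq_zero]
        exact ht
      rw [this, add_zero]
    rw [heq]
    exact Submodule.mem_map_of_mem hf
  have hinj : Function.Injective (T.mkQ.restrict hmap) := by
    intro a b hab
    have h1 : T.mkQ (a : EVec 𝔽) = T.mkQ (b : EVec 𝔽) := congrArg Subtype.val hab
    rw [Submodule.mkQ_apply, Submodule.mkQ_apply] at h1
    have h2 : (a : EVec 𝔽) - b ∈ T := (Submodule.Quotient.eq T).mp h1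
    have h3 : (a : EVec 𝔽) - b ∈ W :=
      sub_mem (Submodule.mem_inf.mp a.2).2 (Submodule.mem_inf.mp b.2).2
    have h4 : (a : EVec 𝔽) - b ∈ T ⊓ W := Submodule.mem_inf.mpr ⟨h2, h3⟩
    rw [hbot, Submodule.mem_bot] at h4
    exact Subtype.ext (sub_eq_zero.mp h4)
  exact FiniteDimensional.of_injective (T.mkQ.restrict hmap) hinj

private lemma li_not_findim {M : Type} [AddCommGroup M] [Module 𝔽 M]
    (p : Submodule 𝔽 M) (hfd : FiniteDimensional 𝔽 p) (v : ℕ → M)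
    (hv : LinearIndependent 𝔽 v) (hmem : ∀ n, v n ∈ p) : False := by
  have hli : LinearIndependent 𝔽 (fun n => (⟨v n, hmem n⟩ : p)) := by
    apply LinearIndependent.of_comp p.subtype
    have heq : p.subtype ∘ (fun n => (⟨v n, hmem n⟩ : p)) = v := rfl
    rw [heq]
    exact hv
  have : Finite ℕ := hli.finite
  exact not_finite ℕ

private lemma small_of_findim {A : ℕ → EVec 𝔽} (W : Submodule 𝔽 (EVec 𝔽))
    (h : FiniteDimensional 𝔽 ↥(spanSeq A ⊓ W)) :
    SmallSet ((spanSeq A : Set (EVec 𝔽)) ∩ (W : Set (EVec 𝔽))) := by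
  rintro ⟨C, hC, hsub⟩
  have hmem : ∀ n, C n ∈ spanSeq A ⊓ W := by
    intro n
    have h1 : C n ∈ spanSeq C := Submodule.subset_span ⟨n, rfl⟩
    have h2 : C n ∈ (spanSeq A : Set (EVec 𝔽)) ∩ (W : Set (EVec 𝔽)) := hsub (C n) h1 (hC.1 n)
    exact Submodule.mem_inf.mpr ⟨h2.1, h2.2⟩
  exact li_not_findim (spanSeq A ⊓ W) h C (blockSeq_li hC) hmem

private def nfAux (p : ℕ → EVec 𝔽) : ℕ → ℕ
  | 0 => 0
  | n + 1 => ((p (nfAux p n)).support.sup id) + 1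

private lemma big_of_tails {A : ℕ → EVec 𝔽} (hA : IsBlockSeq A) (W : Submodule 𝔽 (EVec 𝔽))
    (h : ∀ N, ¬ spanSeq (tailSeq A N) ⊓ W = ⊥) :
    BigSet ((spanSeq A : Set (EVec 𝔽)) ∩ (W : Set (EVec 𝔽))) := by
  have pick : ∀ N : ℕ, ∃ x : EVec 𝔽, x ∈ spanSeq (tailSeq A N) ⊓ W ∧ x ≠ 0 := by
    intro N
    obtain ⟨x, hx, hx0⟩ := Submodule.exists_mem_ne_zero_of_ne_bot (h N)
    exact ⟨x, hx, hx0⟩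
  choose p hp hp0 using pick
  set Nf : ℕ → ℕ := nfAux p with hNf
  set c : ℕ → EVec 𝔽 := fun n => p (Nf n) with hc
  have hspan : ∀ n, c n ∈ spanSeq (tailSeq A (Nf n)) := fun n => (Submodule.mem_inf.mp (hp (Nf n))).1
  have hW : ∀ n, c n ∈ W := fun n => (Submodule.mem_inf.mp (hp (Nf n))).2
  have hc0 : ∀ n, c n ≠ 0 := fun n => hp0 (Nf n)
  have hlow : ∀ n, ∀ j ∈ (c n).support, Nf n ≤ j := fun n => tail_supp hA (Nf n) (hspan n)
  have hhigh : ∀ n, ∀ j ∈ (c n).support, j < Nf (n + 1) := by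
    intro n j hj
    have : j ≤ (c n).support.sup id := Finset.le_sup (f := id) hj
    exact Nat.lt_succ_of_le this
  have hmono : Monotone Nf := by
    apply monotone_nat_of_le_succ
    intro n
    obtain ⟨j, hj⟩ := Finsupp.support_nonempty_iff.mpr (hc0 n)
    exact le_of_lt (lt_of_le_of_lt (hlow n j hj) (hhigh n j hj))
  have hblock : IsBlockSeq c := by
    refine ⟨hc0, ?_⟩
    intro m n hmn i hi j hj
    exact lt_of_lt_of_le (hhigh m i hi) (le_trans (hmono (by omega : m + 1 ≤ n)) (hlow n j hj))
  refine ⟨c, hblock, ?_⟩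
  have hle : spanSeq c ≤ spanSeq A ⊓ W := by
    apply Submodule.span_le.mpr
    rintro _ ⟨n, rfl⟩
    exact Submodule.mem_inf.mpr ⟨tail_le A (Nf n) (hspan n), hW n⟩
  intro x hx _
  have := Submodule.mem_inf.mp (hle hx)
  exact ⟨this.1, this.2⟩

private lemma tail_blockSeq {A : ℕ → EVec 𝔽} (hA : IsBlockSeq A) (N : ℕ) :
    IsBlockSeq (tailSeq A N) :=
  ⟨fun n => hA.1 (n + N), fun m n hmn => hA.2 (m + N) (n + N) (by omega)⟩

end Statement9Aux

/-- `⟨A⟩ ∩ W` is small iff `⟨A/N⟩ ∩ W = {0}` for some `N`; consequently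
(1) `A, B` are almost disjoint iff `⟨A/N⟩ ∩ ⟨B⟩ = {0}` for some `N`, and (2) if `A/N`
and `B` are almost disjoint for some `N` then so are `A` and `B`. -/
theorem statement9 [Countable 𝔽] :
    (∀ A : ℕ → EVec 𝔽, IsBlockSeq A → ∀ W : Submodule 𝔽 (EVec 𝔽),
      (SmallSet ((spanSeq A : Set (EVec 𝔽)) ∩ (W : Set (EVec 𝔽))) ↔
        ∃ N, spanSeq (tailSeq A N) ⊓ W = ⊥)) ∧
    (∀ A B : ℕ → EVec 𝔽, IsBlockSeq A → IsBlockSeq B →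
      (AlmostDisjoint (spanSeq A) (spanSeq B) ↔
        ∃ N, spanSeq (tailSeq A N) ⊓ spanSeq B = ⊥)) ∧
    (∀ A B : ℕ → EVec 𝔽, IsBlockSeq A → IsBlockSeq B →
      (∃ N, AlmostDisjoint (spanSeq (tailSeq A N)) (spanSeq B)) →
      AlmostDisjoint (spanSeq A) (spanSeq B)) := by
  have part1 : ∀ A : ℕ → EVec 𝔽, IsBlockSeq A → ∀ W : Submodule 𝔽 (EVec 𝔽),
      (SmallSet ((spanSeq A : Set (EVec 𝔽)) ∩ (W : Set (EVec 𝔽))) ↔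
        ∃ N, spanSeq (tailSeq A N) ⊓ W = ⊥) := by
    intro A hA W
    constructor
    · intro hsmall
      by_contra hno
      push_neg at hno
      exact hsmall (big_of_tails hA W hno)
    · rintro ⟨N, hN⟩
      exact small_of_findim W (findim_of_tail_bot N W hN)
  have part2 : ∀ A B : ℕ → EVec 𝔽, IsBlockSeq A → IsBlockSeq B →
      (AlmostDisjoint (spanSeq A) (spanSeq B) ↔
        ∃ N, spanSeq (tailSeq A N) ⊓ spanSeq B = ⊥) := by
    intro A B hA hB
    constructor
    · intro hAD
      exact (part1 A hA (spanSeq B)).mp (small_of_findim (spanSeq B) hAD)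
    · rintro ⟨N, hN⟩
      exact findim_of_tail_bot N (spanSeq B) hN
  refine ⟨part1, part2, ?_⟩
  rintro A B hA hB ⟨N, hN⟩
  obtain ⟨M, hM⟩ := (part2 (tailSeq A N) B (tail_blockSeq hA N) hB).mp hN
  refine (part2 A B hA hB).mpr ⟨M + N, ?_⟩
  have heq : tailSeq (tailSeq A N) M = tailSeq A (M + N) := by
    funext n
    show A (n + M + N) = A (n + (M + N))
    rw [Nat.add_assoc]
  rwa [heq] at hM
end
end
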